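/- arXiv:2205.06846 — 11 statements merged into one kernel-verified Lean document; each statement's English description precedes it below -/
import Mathlib

section
/- For all real x ≥ 0, |x - 1| · log(1 + |x - 1|) ≤ 2(1 - x + x·log x), where x·log x is interpreted as 0 at x = 0. -/
/-!
For `x ≥ 1` the claim reads `2 (x - 1) ≤ (x + 1) log x`: both sides agree at `1`, and the
derivative of their difference is `log x - (1 - x⁻¹) ≥ 0`. For `x < 1`, the bound
`log (2 - x) ≤ 1 - x` reduces the claim to `x² - 1 ≤ 2 x log x`, which is `sinh (log x) ≤ log x`
for `log x ≤ 0`, multiplied by `2x`.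
-/

open Set

namespace Real

theorem two_mul_sub_one_le_add_one_mul_log {x : ℝ} (hx : 1 ≤ x) :
    2 * (x - 1) ≤ (x + 1) * log x := by
  set φ : ℝ → ℝ := fun t ↦ (t + 1) * log t - 2 * (t - 1)
  have hφ' : ∀ t : ℝ, 0 < t → HasDerivAt φ (log t + (t + 1) * t⁻¹ - 2) t := fun t ht ↦
    ((((hasDerivAt_id t).add_const 1).mul (hasDerivAt_log ht.ne')).sub
      (((hasDerivAt_id t).sub_const 1).const_mul 2)).congr_deriv (by simp only [id]; ring)
  have hmono : MonotoneOn φ (Ici 1) := by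
    refine monotoneOn_of_hasDerivWithinAt_nonneg (convex_Ici 1)
      (fun t ht ↦ (hφ' t (zero_lt_one.trans_le ht)).continuousAt.continuousWithinAt)
      (fun t ht ↦ (hφ' t ?_).hasDerivWithinAt) fun t ht ↦ ?_
    all_goals rw [interior_Ici, mem_Ioi] at ht
    · linarith
    · have ht0 : 0 < t := by linarith
      rw [add_mul, mul_inv_cancel₀ ht0.ne']
      linarith [one_sub_inv_le_log_of_pos ht0]
  have hφx := hmono self_mem_Ici hx hx
  simp only [φ, log_one] at hφx
  linarith

theorem sq_sub_one_le_two_mul_mul_log {x : ℝ} (h0 : 0 ≤ x) (h1 : x ≤ 1) :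
    x ^ 2 - 1 ≤ 2 * (x * log x) := by
  obtain rfl | hpos := h0.eq_or_lt
  · norm_num
  have hsinh : sinh (log x) ≤ log x := sinh_le_self_iff.mpr (log_nonpos h0 h1)
  rw [sinh_log hpos] at hsinh
  have hmul := mul_le_mul_of_nonneg_left hsinh h0
  rw [mul_div_assoc', mul_sub, mul_inv_cancel₀ hpos.ne'] at hmul
  linarith

end Real

/-- For all real `x ≥ 0`, `|x - 1| * log (1 + |x - 1|) ≤ 2 * (1 - x + x * log x)`.
Note `Real.log 0 = 0`, so `x * log x` is `0` at `x = 0`. -/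
theorem f_div_generator_le (x : ℝ) (hx : 0 ≤ x) :
    |x - 1| * Real.log (1 + |x - 1|) ≤ 2 * (1 - x + x * Real.log x) := by
  rcases le_or_gt 1 x with h1 | h1
  · rw [abs_of_nonneg (by linarith), add_sub_cancel]
    linarith [Real.two_mul_sub_one_le_add_one_mul_log h1]
  · rw [abs_of_neg (by linarith), neg_sub, ← add_sub_assoc, one_add_one_eq_two]
    calc (1 - x) * Real.log (2 - x) ≤ (1 - x) * (1 - x) := by
          gcongr
          linarith [Real.log_le_sub_one_of_pos (by linarith : (0 : ℝ) < 2 - x)]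
      _ ≤ 2 * (1 - x + x * Real.log x) := by
          linarith [Real.sq_sub_one_le_two_mul_mul_log hx h1.le]
end

section
/- For all real x ≥ 0, the inverse of the function erfi(z) = ∫₀^z exp(t²) dt satisfies erfi⁻¹(x) ≤ 1 + √(log(1 + x)). -/
open Real intervalIntegral MeasureTheory

lemma exp_sq_sub_one_le_integral_exp_sq {z : ℝ} (hz : 1 ≤ z) :
    exp ((z - 1) ^ 2) ≤ ∫ t in (0 : ℝ)..z, exp (t ^ 2) := by
  have hint (a b : ℝ) : IntervalIntegrable (fun t => exp (t ^ 2)) volume a b :=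
    (by fun_prop : Continuous fun t : ℝ => exp (t ^ 2)).intervalIntegrable a b
  have head_nonneg : 0 ≤ ∫ t in (0 : ℝ)..(z - 1), exp (t ^ 2) :=
    integral_nonneg (by linarith) fun t _ => (exp_pos _).le
  have tail_ge : exp ((z - 1) ^ 2) ≤ ∫ t in (z - 1)..z, exp (t ^ 2) :=
    calc exp ((z - 1) ^ 2) = ∫ _ in (z - 1)..z, exp ((z - 1) ^ 2) := by simp
      _ ≤ ∫ t in (z - 1)..z, exp (t ^ 2) :=
        integral_mono_on (by linarith) (by simp) (hint _ _) fun t ht =>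
          exp_le_exp.2 (pow_le_pow_left₀ (by linarith) ht.1 2)
  rw [← integral_add_adjacent_intervals (hint 0 (z - 1)) (hint _ _)]
  linarith

theorem erfi_inv_le_general (x z : ℝ)
    (h : (∫ t in (0:ℝ)..z, Real.exp (t ^ 2)) = x) :
    z ≤ 1 + Real.sqrt (Real.log (1 + x)) := by
  rcases le_or_gt z 1 with hz1 | hz1
  · linarith [sqrt_nonneg (log (1 + x))]
  have hexp : exp ((z - 1) ^ 2) ≤ 1 + x := by
    linarith [exp_sq_sub_one_le_integral_exp_sq hz1.le]
  have hlog : (z - 1) ^ 2 ≤ log (1 + x) :=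
    (le_log_iff_exp_le (by linarith [exp_pos ((z - 1) ^ 2)])).2 hexp
  linarith [le_sqrt_of_sq_le hlog]

/-- The inverse of `erfi z = ∫₀^z exp(t²) dt` satisfies `erfi⁻¹ x ≤ 1 + √(log (1 + x))`
for all `x ≥ 0`: if `z ≥ 0` and `erfi z = x`, then `z ≤ 1 + √(log (1 + x))`. -/
theorem erfi_inv_le (x z : ℝ) (hx : 0 ≤ x) (hz : 0 ≤ z)
    (h : (∫ t in (0:ℝ)..z, Real.exp (t ^ 2)) = x) :
    z ≤ 1 + Real.sqrt (Real.log (1 + x)) :=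
  erfi_inv_le_general x z h
end

section
/- Let α > 0, C > 0 and V_α(t,S) = C√(αt)·[2∫₀^{S/√(4αt)} (∫₀^u exp(x²) dx) du - 1]. Then V_α satisfies the backward heat equation ∂_t V_α + α·∂_{SS} V_α = 0 for all t > 0 and S ∈ ℝ. -/
/-!
Writing `η = S / (2√(αt))`, the ansatz `V(t, S) = √(αt) φ(η)` turns `∂_t V + α ∂_SS V = 0` into
the profile equation `φ'' = 2 (η φ' - φ)`. With `G(y) = ∫₀^y exp(x²) dx`, an integration by parts
gives the closed form `2 ∫₀^y G - 1 = 2 y G(y) - exp(y²)` for the profile of `V_α`, so its second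
derivative `2 exp(y²)` is exactly `2 (y φ' - φ)`.
-/

/-- The switching-adjusted potential
`V_α(t,S) = C √(αt) [2 ∫₀^{S/√(4αt)} (∫₀^u exp(x²) dx) du - 1]`. -/
noncomputable def Vpot (C α t S : ℝ) : ℝ :=
  C * Real.sqrt (α * t) *
    (2 * (∫ u in (0:ℝ)..(S / Real.sqrt (4 * α * t)),
        ∫ x in (0:ℝ)..u, Real.exp (x ^ 2)) - 1)

open Real

def SolvesBackwardHeatAt (α : ℝ) (V : ℝ → ℝ → ℝ) (t S : ℝ) : Prop :=
  deriv (fun τ => V τ S) t + α * deriv (fun s => deriv (fun s' => V t s') s) S = 0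

theorem SolvesBackwardHeatAt.const_mul {α : ℝ} {V : ℝ → ℝ → ℝ} {t S : ℝ}
    (h : SolvesBackwardHeatAt α V t S) (c : ℝ) :
    SolvesBackwardHeatAt α (fun τ S => c * V τ S) t S := by
  unfold SolvesBackwardHeatAt at h ⊢
  simp only [deriv_const_mul_field']
  linear_combination c * h

theorem HasDerivAt.comp_div_const {f : ℝ → ℝ} {f' k s : ℝ} (hf : HasDerivAt f f' (s / k)) :
    HasDerivAt (fun s => f (s / k)) (f' / k) s := by
  have h := hf.comp s ((hasDerivAt_id s).div_const k)
  rwa [mul_one_div] at h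

noncomputable def selfSimilar (α : ℝ) (φ : ℝ → ℝ) (τ S : ℝ) : ℝ :=
  √(α * τ) * φ (S / (2 * √(α * τ)))

section SelfSimilar

variable {φ φ' φ'' : ℝ → ℝ} {α t : ℝ}

theorem hasDerivAt_selfSimilar_time (hφ : ∀ y, HasDerivAt φ (φ' y) y) (hαt : 0 < α * t)
    (S : ℝ) :
    HasDerivAt (fun τ => selfSimilar α φ τ S)
      (α / (2 * √(α * t)) * (φ (S / (2 * √(α * t)))
        - S / (2 * √(α * t)) * φ' (S / (2 * √(α * t))))) t := by
  have hρ : HasDerivAt (fun τ => √(α * τ)) (α / (2 * √(α * t))) t := by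
    simpa [div_eq_mul_inv, mul_comm] using ((hasDerivAt_id t).const_mul α).sqrt hαt.ne'
  have hη : HasDerivAt (fun τ => S / (2 * √(α * τ)))
      ((0 * (2 * √(α * t)) - S * (2 * (α / (2 * √(α * t))))) / (2 * √(α * t)) ^ 2) t :=
    (hasDerivAt_const t S).div (hρ.const_mul 2) (by positivity)
  have hφη : HasDerivAt (fun τ => φ (S / (2 * √(α * τ))))
      (φ' (S / (2 * √(α * t))) * ((0 * (2 * √(α * t)) - S * (2 * (α / (2 * √(α * t)))))
        / (2 * √(α * t)) ^ 2)) t :=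
    (hφ _).comp t hη
  refine (hρ.mul hφη).congr_deriv ?_
  field_simp
  ring

theorem deriv_deriv_selfSimilar_space (hφ : ∀ y, HasDerivAt φ (φ' y) y)
    (hφ' : ∀ y, HasDerivAt φ' (φ'' y) y) (S : ℝ) :
    deriv (fun s => deriv (fun s' => selfSimilar α φ t s') s) S
      = φ'' (S / (2 * √(α * t))) / (4 * √(α * t)) := by
  have hspace : deriv (fun s' => selfSimilar α φ t s') =
      fun s => √(α * t) * (φ' (s / (2 * √(α * t))) / (2 * √(α * t))) :=
    funext fun s ↦ (((hφ _).comp_div_const).const_mul _).deriv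
  rw [hspace, ((((hφ' _).comp_div_const).div_const _).const_mul _).deriv]
  field_simp
  ring

theorem solvesBackwardHeatAt_selfSimilar (hφ : ∀ y, HasDerivAt φ (φ' y) y)
    (hφ' : ∀ y, HasDerivAt φ' (φ'' y) y) (hode : ∀ y, φ'' y = 2 * (y * φ' y - φ y))
    (hαt : 0 < α * t) (S : ℝ) : SolvesBackwardHeatAt α (selfSimilar α φ) t S := by
  rw [SolvesBackwardHeatAt, (hasDerivAt_selfSimilar_time hφ hαt S).deriv,
    deriv_deriv_selfSimilar_space hφ hφ', hode]
  field_simp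
  ring

end SelfSimilar

noncomputable def expSqIntegral (u : ℝ) : ℝ := ∫ x in (0:ℝ)..u, exp (x ^ 2)

noncomputable def Vprofile (y : ℝ) : ℝ := 2 * (∫ u in (0:ℝ)..y, expSqIntegral u) - 1

theorem hasDerivAt_expSqIntegral (u : ℝ) : HasDerivAt expSqIntegral (exp (u ^ 2)) u :=
  ((continuous_exp.comp (continuous_pow 2)).integral_hasStrictDerivAt 0 u).hasDerivAt

theorem continuous_expSqIntegral : Continuous expSqIntegral :=
  continuous_iff_continuousAt.2 fun u ↦ (hasDerivAt_expSqIntegral u).continuousAt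

theorem hasDerivAt_Vprofile (y : ℝ) : HasDerivAt Vprofile (2 * expSqIntegral y) y :=
  ((continuous_expSqIntegral.integral_hasStrictDerivAt 0 y).hasDerivAt.const_mul 2).sub_const 1

theorem Vprofile_eq (y : ℝ) : Vprofile y = 2 * y * expSqIntegral y - exp (y ^ 2) := by
  have hprimitive (u : ℝ) : HasDerivAt (fun v => v * expSqIntegral v - exp (v ^ 2) / 2)
      (expSqIntegral u) u := by
    have := ((hasDerivAt_id' u).mul (hasDerivAt_expSqIntegral u)).sub
      (((hasDerivAt_pow 2 u).exp).div_const 2)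
    exact this.congr_deriv (by push_cast; ring)
  rw [Vprofile, intervalIntegral.integral_eq_sub_of_hasDerivAt (fun u _ ↦ hprimitive u)
    (continuous_expSqIntegral.intervalIntegrable 0 y)]
  simp only [zero_mul, zero_pow two_ne_zero, exp_zero]
  ring

theorem Vprofile_ode (y : ℝ) :
    2 * exp (y ^ 2) = 2 * (y * (2 * expSqIntegral y) - Vprofile y) := by
  rw [Vprofile_eq]
  ring

theorem sqrt_four_mul (x : ℝ) : √(4 * x) = 2 * √x := by
  rw [sqrt_mul zero_le_four, show (4 : ℝ) = 2 ^ 2 by norm_num, sqrt_sq zero_le_two]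

theorem Vpot_eq_const_mul_selfSimilar (C α : ℝ) :
    Vpot C α = fun τ S => C * selfSimilar α Vprofile τ S := by
  funext τ S
  rw [Vpot, selfSimilar, Vprofile, mul_assoc 4, sqrt_four_mul, mul_assoc]
  rfl

theorem Vpot_backward_heat_general (C α : ℝ) (hα : 0 < α) (t S : ℝ) (ht : 0 < t) :
    deriv (fun τ => Vpot C α τ S) t
      + α * deriv (fun s => deriv (fun s' => Vpot C α t s') s) S = 0 := by
  have hsol : SolvesBackwardHeatAt α (selfSimilar α Vprofile) t S :=
    solvesBackwardHeatAt_selfSimilar hasDerivAt_Vprofile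
      (fun y ↦ (hasDerivAt_expSqIntegral y).const_mul 2) Vprofile_ode (mul_pos hα ht) S
  rw [← SolvesBackwardHeatAt, Vpot_eq_const_mul_selfSimilar]
  exact hsol.const_mul C

/-- `V_α` satisfies the backward heat equation `∂_t V_α + α ∂_{SS} V_α = 0` for `t > 0`. -/
theorem Vpot_backward_heat (C α : ℝ) (hC : 0 < C) (hα : 0 < α) (t S : ℝ) (ht : 0 < t) :
    deriv (fun τ => Vpot C α τ S) t
      + α * deriv (fun s => deriv (fun s' => Vpot C α t s') s) S = 0 :=
  Vpot_backward_heat_general C α hα t S ht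
end

section
/- Let α > 0 and V_α(t,S) = C√(αt)·[2∫₀^{S/√(4αt)} (∫₀^u exp(x²) dx) du - 1] with C > 0. For all S ≥ 0 and t > 0, the discrete derivative ∇̄_S V_α(t,S) = (1/2)[V_α(t,S+1) - V_α(t,S-1)] is, as a function of t, decreasing and convex; and as a function of S, convex. -/
/-! With `g u = ∫₀^u exp (x²)` and `c = √(4αt)`, the substitution `y = c u` turns the discrete
derivative into `(C/2) ∫_{S-1}^{S+1} g (y / c) dy`. Since `g` is odd, for `S ≥ 0` the part of the
window below `0` cancels against its mirror image, leaving an integral over `[|S-1|, S+1] ⊆ [0, ∞)`.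
There `g` is increasing and convex while `t ↦ y / √(4αt)` is decreasing and convex, so every
integrand is decreasing and convex in `t`. In `S`, the window integral has derivative
`g ((S+1)/c) - g ((S-1)/c)`, which increases for `S ≥ 0` because `e^{x²}` is larger at `(S+1)/c`
than at `(S-1)/c`. -/

open Real Set MeasureTheory

section Convexity

variable {E : Type*} [AddCommGroup E] [Module ℝ E] {s : Set E} {t : Set ℝ} {f : E → ℝ}
  {g : ℝ → ℝ}

theorem ConvexOn.comp_of_mapsTo (hg : ConvexOn ℝ t g) (hf : ConvexOn ℝ s f)
    (hg' : MonotoneOn g t) (hst : MapsTo f s t) : ConvexOn ℝ s (g ∘ f) :=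
  ⟨hf.1, fun _ hx _ hy _ _ ha hb hab =>
    (hg' (hst (hf.1 hx hy ha hb hab)) (hg.1 (hst hx) (hst hy) ha hb hab)
      (hf.2 hx hy ha hb hab)).trans (hg.2 (hst hx) (hst hy) ha hb hab)⟩

theorem ConvexOn.comp_concaveOn_of_mapsTo (hg : ConvexOn ℝ t g) (hf : ConcaveOn ℝ s f)
    (hg' : AntitoneOn g t) (hst : MapsTo f s t) : ConvexOn ℝ s (g ∘ f) :=
  ⟨hf.1, fun _ hx _ hy _ _ ha hb hab =>
    (hg' (hg.1 (hst hx) (hst hy) ha hb hab) (hst (hf.1 hx hy ha hb hab))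
      (hf.2 hx hy ha hb hab)).trans (hg.2 (hst hx) (hst hy) ha hb hab)⟩

end Convexity

theorem convexOn_div_sqrt_mul {k a : ℝ} (hk : 0 ≤ k) (ha : 0 < a) :
    ConvexOn ℝ (Ioi 0) fun t => k / √(a * t) := by
  have hsqrt : ConcaveOn ℝ (Ioi 0) fun t => √(a * t) := by
    simpa [sqrt_mul ha.le] using
      (strictConcaveOn_sqrt.concaveOn.subset Ioi_subset_Ici_self (convex_Ioi 0)).smul
        (sqrt_nonneg a)
  have hinv : ConvexOn ℝ (Ioi 0) fun x : ℝ => x⁻¹ := by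
    simpa using convexOn_zpow (𝕜 := ℝ) (-1)
  have := (hinv.comp_concaveOn_of_mapsTo hsqrt antitoneOn_inv_pos
    fun t ht => sqrt_pos.2 (mul_pos ha ht)).smul hk
  simpa [div_eq_mul_inv] using this

theorem antitoneOn_div_sqrt_mul {k a : ℝ} (hk : 0 ≤ k) (ha : 0 < a) :
    AntitoneOn (fun t => k / √(a * t)) (Ioi 0) := fun _ ht _ _ hts =>
  div_le_div_of_nonneg_left hk (sqrt_pos.2 (mul_pos ha ht))
    (sqrt_le_sqrt (mul_le_mul_of_nonneg_left hts ha.le))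

namespace intervalIntegral

variable {a b : ℝ}

theorem convexOn_integral {E : Type*} [AddCommGroup E] [Module ℝ E] {s : Set E}
    {f : E → ℝ → ℝ} (hab : a ≤ b) (hint : ∀ x ∈ s, IntervalIntegrable (f x) volume a b)
    (hf : ∀ y ∈ Icc a b, ConvexOn ℝ s fun x => f x y) :
    ConvexOn ℝ s fun x => ∫ y in a..b, f x y := by
  refine ⟨(hf a ⟨le_rfl, hab⟩).1, fun x hx x' hx' μ ν hμ hν hμν => ?_⟩
  calc ∫ y in a..b, f (μ • x + ν • x') y
      ≤ ∫ y in a..b, (μ * f x y + ν * f x' y) :=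
        integral_mono_on hab (hint _ ((hf a ⟨le_rfl, hab⟩).1 hx hx' hμ hν hμν))
          (((hint x hx).const_mul μ).add ((hint x' hx').const_mul ν))
          fun y hy => (hf y hy).2 hx hx' hμ hν hμν
    _ = μ • (∫ y in a..b, f x y) + ν • ∫ y in a..b, f x' y := by
        rw [integral_add ((hint x hx).const_mul μ) ((hint x' hx').const_mul ν),
          integral_const_mul, integral_const_mul, smul_eq_mul, smul_eq_mul]

theorem antitoneOn_integral {α : Type*} [Preorder α] {s : Set α} {f : α → ℝ → ℝ}
    (hab : a ≤ b) (hint : ∀ x ∈ s, IntervalIntegrable (f x) volume a b)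
    (hf : ∀ y ∈ Icc a b, AntitoneOn (fun x => f x y) s) :
    AntitoneOn (fun x => ∫ y in a..b, f x y) s := fun x hx x' hx' hxx' =>
  integral_mono_on hab (hint x' hx') (hint x hx) fun y hy => hf y hy hx hx' hxx'

theorem integral_eq_integral_abs_of_odd {G : ℝ → ℝ} (hG : Function.Odd G)
    (hc : Continuous G) (a b : ℝ) : ∫ x in a..b, G x = ∫ x in |a|..b, G x := by
  rcases le_or_gt 0 a with ha | ha
  · rw [abs_of_nonneg ha]
  have hsymm : ∫ x in a..-a, G x = 0 := by
    have := integral_comp_neg (a := a) (b := -a) G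
    simp only [hG _, integral_neg, neg_neg] at this
    linarith
  rw [abs_of_neg ha, ← integral_add_adjacent_intervals (hc.intervalIntegrable a (-a))
    (hc.intervalIntegrable (-a) b), hsymm, zero_add]

theorem hasDerivAt_integral_sub_add {G : ℝ → ℝ} (hG : Continuous G) (h S : ℝ) :
    HasDerivAt (fun S => ∫ y in (S - h)..(S + h), G y) (G (S + h) - G (S - h)) S := by
  have hF : ∀ x, HasDerivAt (fun u => ∫ y in 0..u, G y) (G x) x := fun x =>
    (hG.integral_hasStrictDerivAt 0 x).hasDerivAt
  have hW : (fun S => ∫ y in (S - h)..(S + h), G y)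
      = fun S => (∫ y in 0..(S + h), G y) - ∫ y in 0..(S - h), G y := by
    funext S
    rw [integral_interval_sub_left (hG.intervalIntegrable _ _) (hG.intervalIntegrable _ _)]
  rw [hW]
  exact (hF (S + h)).comp_add_const.sub (hF (S - h)).comp_sub_const

theorem convexOn_integral_sub_add {G : ℝ → ℝ} (hG : Continuous G) {h : ℝ} {D : Set ℝ}
    (hD : Convex ℝ D) (hmono : MonotoneOn (fun S => G (S + h) - G (S - h)) D) :
    ConvexOn ℝ D fun S => ∫ y in (S - h)..(S + h), G y := by
  have hderiv := hasDerivAt_integral_sub_add hG h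
  refine MonotoneOn.convexOn_of_deriv hD (fun S _ => (hderiv S).continuousAt.continuousWithinAt)
    (fun S _ => (hderiv S).differentiableAt.differentiableWithinAt) ?_
  rw [funext fun S => (hderiv S).deriv]
  exact hmono.mono interior_subset

end intervalIntegral

noncomputable def integralExpSq (u : ℝ) : ℝ := ∫ x in 0..u, exp (x ^ 2)

theorem continuous_exp_sq : Continuous fun x : ℝ => exp (x ^ 2) := by fun_prop

theorem hasDerivAt_integralExpSq (u : ℝ) : HasDerivAt integralExpSq (exp (u ^ 2)) u :=
  (continuous_exp_sq.integral_hasStrictDerivAt 0 u).hasDerivAt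

theorem continuous_integralExpSq : Continuous integralExpSq :=
  continuous_iff_continuousAt.2 fun u => (hasDerivAt_integralExpSq u).continuousAt

theorem continuous_integralExpSq_div (c : ℝ) : Continuous fun y => integralExpSq (y / c) :=
  continuous_integralExpSq.comp (continuous_id.div_const c)

theorem monotone_integralExpSq : Monotone integralExpSq :=
  (strictMono_of_hasDerivAt_pos hasDerivAt_integralExpSq fun _ => exp_pos _).monotone

theorem integralExpSq_odd : Function.Odd integralExpSq := fun u => by
  have := intervalIntegral.integral_comp_neg (a := u) (b := 0) fun x => exp (x ^ 2)
  simp only [neg_sq, neg_zero] at this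
  rw [integralExpSq, ← this, intervalIntegral.integral_symm, integralExpSq]

theorem convexOn_integralExpSq : ConvexOn ℝ (Ici 0) integralExpSq := by
  refine MonotoneOn.convexOn_of_deriv (convex_Ici 0) continuous_integralExpSq.continuousOn
    (fun u _ => (hasDerivAt_integralExpSq u).differentiableAt.differentiableWithinAt) ?_
  rw [funext fun u => (hasDerivAt_integralExpSq u).deriv, interior_Ici]
  exact fun x hx y _ hxy => exp_le_exp.2 (pow_le_pow_left₀ (le_of_lt hx) hxy 2)

theorem convexOn_integralExpSq_div_sqrt {y a : ℝ} (hy : 0 ≤ y) (ha : 0 < a) :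
    ConvexOn ℝ (Ioi 0) fun t => integralExpSq (y / √(a * t)) :=
  convexOn_integralExpSq.comp_of_mapsTo (convexOn_div_sqrt_mul hy ha)
    (monotone_integralExpSq.monotoneOn _) fun _ _ => div_nonneg hy (sqrt_nonneg _)

theorem antitoneOn_integralExpSq_div_sqrt {y a : ℝ} (hy : 0 ≤ y) (ha : 0 < a) :
    AntitoneOn (fun t => integralExpSq (y / √(a * t))) (Ioi 0) :=
  monotone_integralExpSq.comp_antitoneOn (antitoneOn_div_sqrt_mul hy ha)

theorem monotoneOn_integralExpSq_div_add_sub {c : ℝ} (hc : 0 < c) :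
    MonotoneOn (fun S => integralExpSq ((S + 1) / c) - integralExpSq ((S - 1) / c)) (Ici 0) := by
  have hderiv : ∀ S,
      HasDerivAt (fun S => integralExpSq ((S + 1) / c) - integralExpSq ((S - 1) / c))
        ((exp (((S + 1) / c) ^ 2) - exp (((S - 1) / c) ^ 2)) / c) S := fun S => by
    have hplus := (hasDerivAt_integralExpSq _).comp S
      (((hasDerivAt_id' S).add_const 1).div_const c)
    have hminus := (hasDerivAt_integralExpSq _).comp S
      (((hasDerivAt_id' S).sub_const 1).div_const c)
    exact (hplus.sub hminus).congr_deriv (by ring)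
  refine monotoneOn_of_deriv_nonneg (convex_Ici 0)
    (fun S _ => (hderiv S).continuousAt.continuousWithinAt)
    (fun S _ => (hderiv S).differentiableAt.differentiableWithinAt) fun S hS => ?_
  rw [interior_Ici] at hS
  rw [(hderiv S).deriv]
  have hsq : (S - 1) ^ 2 ≤ (S + 1) ^ 2 := by nlinarith [mem_Ioi.1 hS]
  have hsq_div : ((S - 1) / c) ^ 2 ≤ ((S + 1) / c) ^ 2 := by
    rw [div_pow, div_pow]; gcongr
  exact div_nonneg (sub_nonneg.2 (exp_le_exp.2 hsq_div)) hc.le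

theorem Vpot_sub_div_two (C S : ℝ) {α t : ℝ} (hαt : 0 < α * t) :
    (Vpot C α t (S + 1) - Vpot C α t (S - 1)) / 2
      = C / 2 * ∫ y in (S - 1)..(S + 1), integralExpSq (y / √(4 * α * t)) := by
  have hc : √(4 * α * t) = 2 * √(α * t) := by
    rw [mul_assoc, sqrt_mul zero_le_four, show (4 : ℝ) = 2 ^ 2 by norm_num, sqrt_sq zero_le_two]
  have hV : ∀ x, Vpot C α t x
      = C * √(α * t) * (2 * (∫ u in 0..x / √(4 * α * t), integralExpSq u) - 1) := fun _ => rfl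
  have hint : ∀ a b : ℝ, IntervalIntegrable integralExpSq volume a b :=
    continuous_integralExpSq.intervalIntegrable
  rw [intervalIntegral.integral_comp_div _ (hc ▸ by positivity),
    ← intervalIntegral.integral_interval_sub_left (hint 0 _) (hint 0 _), hV, hV, smul_eq_mul, hc]
  ring

theorem Vpot_sub_div_two_eq_abs (C S : ℝ) {α t : ℝ} (hαt : 0 < α * t) :
    (Vpot C α t (S + 1) - Vpot C α t (S - 1)) / 2
      = C / 2 * ∫ y in |S - 1|..(S + 1), integralExpSq (y / √(4 * α * t)) := by
  rw [Vpot_sub_div_two C S hαt, intervalIntegral.integral_eq_integral_abs_of_odd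
    (fun y => by simp only [neg_div, integralExpSq_odd _]) (continuous_integralExpSq_div _)]

/-- For `S ≥ 0`, the discrete derivative `∇̄_S V_α(t,S) = (V_α(t,S+1) - V_α(t,S-1))/2` is,
as a function of `t > 0`, decreasing and convex; and as a function of `S ≥ 0`, convex. -/
theorem Vpot_discrete_deriv_props (C α : ℝ) (hC : 0 < C) (hα : 0 < α) :
    (∀ S : ℝ, 0 ≤ S →
      AntitoneOn (fun t => (Vpot C α t (S + 1) - Vpot C α t (S - 1)) / 2) (Set.Ioi 0) ∧
      ConvexOn ℝ (Set.Ioi 0) (fun t => (Vpot C α t (S + 1) - Vpot C α t (S - 1)) / 2)) ∧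
    (∀ t : ℝ, 0 < t →
      ConvexOn ℝ (Set.Ici 0) (fun S => (Vpot C α t (S + 1) - Vpot C α t (S - 1)) / 2)) := by
  have hC2 : 0 ≤ C / 2 := by positivity
  have h4α : 0 < 4 * α := by positivity
  have hint : ∀ c a b : ℝ, IntervalIntegrable (fun y => integralExpSq (y / c)) volume a b :=
    fun c => (continuous_integralExpSq_div c).intervalIntegrable
  refine ⟨fun S hS => ?_, fun t ht => ?_⟩
  · have hD : EqOn (fun t => C / 2 * ∫ y in |S - 1|..(S + 1), integralExpSq (y / √(4 * α * t)))
        (fun t => (Vpot C α t (S + 1) - Vpot C α t (S - 1)) / 2) (Ioi 0) := fun t ht =>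
      (Vpot_sub_div_two_eq_abs C S (mul_pos hα ht)).symm
    have hab : |S - 1| ≤ S + 1 := abs_sub_le_iff.2 ⟨by linarith, by linarith⟩
    have hy : ∀ y ∈ Icc |S - 1| (S + 1), 0 ≤ y := fun y hy => (abs_nonneg _).trans hy.1
    constructor
    · intro t ht t' ht' htt'
      rw [← hD ht, ← hD ht']
      exact mul_le_mul_of_nonneg_left (intervalIntegral.antitoneOn_integral hab
        (fun _ _ => hint _ _ _) (fun y hy' => antitoneOn_integralExpSq_div_sqrt (hy y hy') h4α)
        ht ht' htt') hC2
    · exact ((intervalIntegral.convexOn_integral hab (fun _ _ => hint _ _ _)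
        fun y hy' => convexOn_integralExpSq_div_sqrt (hy y hy') h4α).smul hC2).congr hD
  · rw [funext fun S => Vpot_sub_div_two C S (mul_pos hα ht)]
    exact (intervalIntegral.convexOn_integral_sub_add (continuous_integralExpSq_div _)
      (convex_Ici 0) (monotoneOn_integralExpSq_div_add_sub (sqrt_pos.2 (by positivity)))).smul hC2
end

section
/- Let α ≥ 2 and consider h(t,S) = (λ/G)·exp(1/(αt))·cosh(S/(αt)) + exp(1/(4αt))·cosh(S/(2αt)) - λ/G - √(t/(t-1))·exp(S²/(4αt(t-1))) for integers t ≥ 2 and real S ≥ 0, with λ ≥ 0, G > 0, and α ≥ 4λ/G + 2. Then h(t,S) ≤ 0 for all t ≥ 2 and S ≥ 0. -/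
/-!
Bound both `cosh` factors by `cosh y ≤ exp (y ^ 2 / 2)`; the two resulting exponents are dominated
by `x = 1/(αt) + (S/(αt))²/2`, so with `L = λ/G` the positive part is at most `(L + 1) eˣ - L`,
which by convexity is at most `exp ((L + 1) x)`. Since `α ≥ 2 (L + 1)`, `(L + 1) x` is at most
`1/(2t) + S²/(4αt(t-1))`, and `exp (1/(2t)) ≤ √(t/(t-1))` because `eʸ ≤ 1/(1-y)` for `0 ≤ y < 1`.
-/

open Real

lemma exp_half_le_sqrt_one_div_one_sub {x : ℝ} (h0 : 0 ≤ x) (h1 : x < 1) :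
    exp (x / 2) ≤ √(1 / (1 - x)) := by
  rw [exp_half]
  exact sqrt_le_sqrt (exp_bound_div_one_sub_of_interval h0 h1)

lemma exp_one_div_two_mul_le_sqrt_div_sub_one {T : ℝ} (hT : 1 < T) :
    exp (1 / (2 * T)) ≤ √(T / (T - 1)) := by
  convert exp_half_le_sqrt_one_div_one_sub (x := 1 / T) (by positivity)
    ((div_lt_one (by linarith)).2 hT) using 2
  · ring
  · field_simp

lemma add_one_mul_exp_sub_le_exp_mul {L : ℝ} (hL : 0 ≤ L) (x : ℝ) :
    (L + 1) * exp x - L ≤ exp ((L + 1) * x) := by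
  have hsub : exp x - 1 ≤ x * exp x := by
    have := mul_le_mul_of_nonneg_left (add_one_le_exp (-x)) (exp_pos x).le
    rw [← exp_add, add_neg_cancel, exp_zero] at this
    linarith
  calc (L + 1) * exp x - L = exp x + L * (exp x - 1) := by ring
    _ ≤ exp x + L * (x * exp x) := by gcongr
    _ = exp x * (L * x + 1) := by ring
    _ ≤ exp x * exp (L * x) := by gcongr; exact add_one_le_exp _
    _ = exp ((L + 1) * x) := by rw [← exp_add]; ring_nf

lemma exp_mul_cosh_le (a b : ℝ) : exp a * cosh b ≤ exp (a + b ^ 2 / 2) := by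
  rw [exp_add]
  gcongr
  exact cosh_le_exp_half_sq b

lemma one_div_four_mul_add_sq_le {a : ℝ} (ha : 0 < a) (S : ℝ) :
    1 / (4 * a) + (S / (2 * a)) ^ 2 / 2 ≤ 1 / a + (S / a) ^ 2 / 2 := by
  have hconst : 1 / (4 * a) ≤ 1 / a := one_div_le_one_div_of_le ha (by linarith)
  have hquad : (S / (2 * a)) ^ 2 ≤ (S / a) ^ 2 := by
    rw [div_pow, div_pow, mul_pow]
    gcongr
    nlinarith
  linarith

lemma add_one_mul_exponent_le {L α T : ℝ} (hα : 2 * (L + 1) ≤ α) (hT : 1 < T)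
    (hL : 0 ≤ L) (S : ℝ) :
    (L + 1) * (1 / (α * T) + (S / (α * T)) ^ 2 / 2)
      ≤ 1 / (2 * T) + S ^ 2 / (4 * α * T * (T - 1)) := by
  have hα0 : 0 < α := by linarith
  have hαT : 0 < α * T := by positivity
  have hT1 : 0 < T - 1 := by linarith
  have hconst : (L + 1) * (1 / (α * T)) ≤ 1 / (2 * T) := by
    rw [mul_one_div, div_le_div_iff₀ hαT (by linarith)]
    nlinarith
  have hquad : (L + 1) * ((S / (α * T)) ^ 2 / 2) ≤ S ^ 2 / (4 * α * T * (T - 1)) := by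
    have hαT2 : 2 * (L + 1) * (T - 1) ≤ α * T := by nlinarith
    calc (L + 1) * ((S / (α * T)) ^ 2 / 2) = S ^ 2 * ((L + 1) / (2 * (α * T) ^ 2)) := by ring
      _ ≤ S ^ 2 * (1 / (4 * α * T * (T - 1))) := by
          refine mul_le_mul_of_nonneg_left ?_ (sq_nonneg S)
          rw [div_le_div_iff₀ (by positivity) (by positivity)]
          nlinarith [mul_le_mul_of_nonneg_left hαT2 hαT.le]
      _ = S ^ 2 / (4 * α * T * (T - 1)) := by ring
  rw [mul_add]
  exact add_le_add hconst hquad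

theorem residual_nonpos_of_one_lt {L α T : ℝ} (hL : 0 ≤ L) (hα : 2 * (L + 1) ≤ α)
    (hT : 1 < T) (S : ℝ) :
    L * exp (1 / (α * T)) * cosh (S / (α * T))
      + exp (1 / (4 * α * T)) * cosh (S / (2 * α * T)) - L
      - √(T / (T - 1)) * exp (S ^ 2 / (4 * α * T * (T - 1))) ≤ 0 := by
  have hαT : 0 < α * T := mul_pos (by linarith) (by linarith)
  set x := 1 / (α * T) + (S / (α * T)) ^ 2 / 2
  have hfirst : L * exp (1 / (α * T)) * cosh (S / (α * T)) ≤ L * exp x := by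
    rw [mul_assoc]
    exact mul_le_mul_of_nonneg_left (exp_mul_cosh_le _ _) hL
  have hsecond : exp (1 / (4 * α * T)) * cosh (S / (2 * α * T)) ≤ exp x := by
    refine (exp_mul_cosh_le _ _).trans (exp_le_exp.2 ?_)
    simpa only [mul_assoc] using one_div_four_mul_add_sq_le hαT S
  have hlast : exp ((L + 1) * x) ≤ √(T / (T - 1)) * exp (S ^ 2 / (4 * α * T * (T - 1))) :=
    calc exp ((L + 1) * x) ≤ exp (1 / (2 * T) + S ^ 2 / (4 * α * T * (T - 1))) :=
          exp_le_exp.2 (add_one_mul_exponent_le hα hT hL S)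
      _ ≤ _ := by
          rw [exp_add]
          gcongr
          exact exp_one_div_two_mul_le_sqrt_div_sub_one hT
  linarith [add_one_mul_exp_sub_le_exp_mul hL x]

theorem residual_h_nonpos_general (lam G α : ℝ) (hlam : 0 ≤ lam) (hG : 0 < G)
    (hα : 4 * lam / G + 2 ≤ α)
    (t : ℕ) (ht : 2 ≤ t) (S : ℝ) :
    lam / G * Real.exp (1 / (α * t)) * Real.cosh (S / (α * t))
      + Real.exp (1 / (4 * α * t)) * Real.cosh (S / (2 * α * t))
      - lam / G
      - Real.sqrt ((t : ℝ) / ((t : ℝ) - 1)) * Real.exp (S ^ 2 / (4 * α * t * ((t : ℝ) - 1)))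
      ≤ 0 := by
  have hL : 0 ≤ lam / G := div_nonneg hlam hG.le
  have hα' : 2 * (lam / G + 1) ≤ α := by rw [mul_div_assoc] at hα; linarith
  have ht' : (1 : ℝ) < t := by exact_mod_cast ht
  exact residual_nonpos_of_one_lt hL hα' ht' S

/-- The key analytic inequality: for `λ ≥ 0`, `G > 0`, `α ≥ 2` with `α ≥ 4λ/G + 2`,
integer `t ≥ 2` and real `S ≥ 0`,
`(λ/G) exp(1/(αt)) cosh(S/(αt)) + exp(1/(4αt)) cosh(S/(2αt)) - λ/G
  - √(t/(t-1)) exp(S²/(4αt(t-1))) ≤ 0`. -/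
theorem residual_h_nonpos (lam G α : ℝ) (hlam : 0 ≤ lam) (hG : 0 < G)
    (hα2 : 2 ≤ α) (hα : 4 * lam / G + 2 ≤ α)
    (t : ℕ) (ht : 2 ≤ t) (S : ℝ) (hS : 0 ≤ S) :
    lam / G * Real.exp (1 / (α * t)) * Real.cosh (S / (α * t))
      + Real.exp (1 / (4 * α * t)) * Real.cosh (S / (2 * α * t))
      - lam / G
      - Real.sqrt ((t : ℝ) / ((t : ℝ) - 1)) * Real.exp (S ^ 2 / (4 * α * t * ((t : ℝ) - 1)))
      ≤ 0 :=
  residual_h_nonpos_general lam G α hlam hG hα t ht S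
end

section
/- Let λ ≥ 0, G > 0, α ≥ 4λ/G + 2, and define ψ(x) = (λ/G)·exp(x/α) + exp(x/(4α)) - λ/G - 1/√(1-x). Then ψ(x) ≤ 0 for all x ∈ (0, 1/2]. -/
/-!
With `β = λ/G` and `0 ≤ x ≤ 1/2`, both exponents lie in `[0, 1/4]`, where `exp t ≤ 1 + 4t/3`.
Since `4β ≤ α - 2`, this gives `β exp(x/α) ≤ β + x/3` and `exp(x/(4α)) ≤ 1 + x/6`, so
`ψ(x) ≤ 1 + x/2 - 1/√(1-x)`, which is `≤ 0` by the Bernoulli-type bound `1 + x/2 ≤ (1-x)^{-1/2}`.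
-/

namespace Real

theorem exp_le_one_add_div_one_sub {t c : ℝ} (ht : 0 ≤ t) (htc : t ≤ c) (hc : c < 1) :
    exp t ≤ 1 + t / (1 - c) := by
  have h1t : 0 < 1 - t := by linarith
  calc exp t ≤ 1 / (1 - t) := exp_bound_div_one_sub_of_interval ht (by linarith)
    _ = 1 + t / (1 - t) := by field_simp; ring
    _ ≤ 1 + t / (1 - c) := by gcongr

theorem one_add_half_le_one_div_sqrt_one_sub {x : ℝ} (hx : x < 1) :
    1 + x / 2 ≤ 1 / √(1 - x) := by
  have hsq : √(1 - x) ^ 2 = 1 - x := sq_sqrt (by linarith)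
  have hs : 0 ≤ √(1 - x) := sqrt_nonneg _
  rw [le_div_iff₀ (sqrt_pos.mpr (by linarith))]
  -- with `s = √(1-x)` this reads `s (3 - s²) ≤ 2`, i.e. `(s - 1)² (s + 2) ≥ 0`
  nlinarith [mul_nonneg (sq_nonneg (√(1 - x) - 1)) (by linarith : (0 : ℝ) ≤ √(1 - x) + 2)]

end Real

open Real

/-- For `λ ≥ 0`, `G > 0`, `α ≥ 4λ/G + 2`, the function
`ψ(x) = (λ/G) exp(x/α) + exp(x/(4α)) - λ/G - 1/√(1-x)` satisfies `ψ(x) ≤ 0`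
on `(0, 1/2]`. -/
theorem psi_nonpos (lam G α : ℝ) (hlam : 0 ≤ lam) (hG : 0 < G)
    (hα : 4 * lam / G + 2 ≤ α) (x : ℝ) (hx0 : 0 < x) (hx1 : x ≤ 1 / 2) :
    lam / G * Real.exp (x / α) + Real.exp (x / (4 * α)) - lam / G
      - 1 / Real.sqrt (1 - x) ≤ 0 := by
  set β := lam / G
  have hβ : 0 ≤ β := div_nonneg hlam hG.le
  have hβα : 4 * β + 2 ≤ α := by rwa [mul_div_assoc] at hα
  have hα0 : 0 < α := by linarith
  have hu : x / α ≤ x / 2 := div_le_div_of_nonneg_left hx0.le two_pos (by linarith)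
  have hv : x / (4 * α) ≤ x / 8 := div_le_div_of_nonneg_left hx0.le (by norm_num) (by linarith)
  have hβu : β * (x / α) ≤ x / 4 := by
    rw [mul_div_assoc', div_le_div_iff₀ hα0 four_pos]
    nlinarith
  have hsqrt := one_add_half_le_one_div_sqrt_one_sub (by linarith : x < 1)
  calc β * exp (x / α) + exp (x / (4 * α)) - β - 1 / √(1 - x)
      ≤ β * (1 + x / α / (1 - 1 / 4)) + (1 + x / (4 * α) / (1 - 1 / 4)) - β - (1 + x / 2) := by
        gcongr
        all_goals exact exp_le_one_add_div_one_sub (by positivity) (by linarith) (by norm_num)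
    _ ≤ 0 := by norm_num; linarith
end

section
/- Let V : ℕ × ℝ → ℝ be convex in its second argument and define x_t = (1/2)[V(t, S+1) - V(t, S-1)] where S_t = S_{t-1} - g_t with g_t ∈ [-1,1] and S_0 = 0. Then for all t ≥ 1: V(t, S_t) - V(t-1, S_{t-1}) ≤ -g_t·x_t + [V(t,S_{t-1}) - V(t-1,S_{t-1})] + (1/2)[V(t,S_{t-1}+1) + V(t,S_{t-1}-1) - 2V(t,S_{t-1})]. -/
open Set

lemma ConvexOn.apply_sub_le_chord {D : Set ℝ} {f : ℝ → ℝ} (hf : ConvexOn ℝ D f) {s g : ℝ}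
    (hs₁ : s - 1 ∈ D) (hs₂ : s + 1 ∈ D) (hg : g ∈ Icc (-1 : ℝ) 1) :
    f (s - g) ≤ (1 + g) / 2 * f (s - 1) + (1 - g) / 2 * f (s + 1) := by
  obtain ⟨hg₁, hg₂⟩ := hg
  have h := hf.2 hs₁ hs₂ (show (0 : ℝ) ≤ (1 + g) / 2 by linarith)
    (show (0 : ℝ) ≤ (1 - g) / 2 by linarith) (by ring)
  simp only [smul_eq_mul] at h
  rwa [show (1 + g) / 2 * (s - 1) + (1 - g) / 2 * (s + 1) = s - g by ring] at h

theorem discrete_ito_general (V : ℕ → ℝ → ℝ) (hconv : ∀ t, ConvexOn ℝ Set.univ (V t))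
    (g S x : ℕ → ℝ) (hg : ∀ t, g t ∈ Set.Icc (-1 : ℝ) 1)
    (hS : ∀ t, 1 ≤ t → S t = S (t - 1) - g t)
    (hx : ∀ t, 1 ≤ t → x t = (V t (S (t - 1) + 1) - V t (S (t - 1) - 1)) / 2) :
    ∀ t, 1 ≤ t →
      V t (S t) - V (t - 1) (S (t - 1)) ≤
        -(g t) * x t + (V t (S (t - 1)) - V (t - 1) (S (t - 1)))
          + (1 / 2) * (V t (S (t - 1) + 1) + V t (S (t - 1) - 1) - 2 * V t (S (t - 1))) := by
  intro t ht
  have chord := (hconv t).apply_sub_le_chord (s := S (t - 1)) (mem_univ _) (mem_univ _) (hg t)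
  rw [hS t ht, hx t ht]
  -- the right-hand side is exactly the chord value minus `V (t - 1) (S (t - 1))`
  linarith

/-- Discrete Itô formula for convex potentials: with `x_t = (V(t,S_{t-1}+1) - V(t,S_{t-1}-1))/2`,
`S_t = S_{t-1} - g_t`, `g_t ∈ [-1,1]`, `S_0 = 0`, for all `t ≥ 1`:
`V(t,S_t) - V(t-1,S_{t-1}) ≤ -g_t x_t + ∇̄_t V(t,S_{t-1}) + (1/2) ∇̄_{SS} V(t,S_{t-1})`. -/
theorem discrete_ito (V : ℕ → ℝ → ℝ) (hconv : ∀ t, ConvexOn ℝ Set.univ (V t))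
    (g S x : ℕ → ℝ) (hg : ∀ t, g t ∈ Set.Icc (-1 : ℝ) 1)
    (hS0 : S 0 = 0) (hS : ∀ t, 1 ≤ t → S t = S (t - 1) - g t)
    (hx : ∀ t, 1 ≤ t → x t = (V t (S (t - 1) + 1) - V t (S (t - 1) - 1)) / 2) :
    ∀ t, 1 ≤ t →
      V t (S t) - V (t - 1) (S (t - 1)) ≤
        -(g t) * x t + (V t (S (t - 1)) - V (t - 1) (S (t - 1)))
          + (1 / 2) * (V t (S (t - 1) + 1) + V t (S (t - 1) - 1) - 2 * V t (S (t - 1))) :=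
  discrete_ito_general V hconv g S x hg hS hx
end

section
/- Let α = 4λ/G + 2 with λ ≥ 0, G > 0, C > 0, and let V_α(t,S) = C√(αt)·[2∫₀^{S/√(4αt)}(∫₀^u exp(x²)dx)du - 1]. Consider the algorithm predicting x_t = (1/2)[V_α(t,S_{t-1}+1) - V_α(t,S_{t-1}-1)] with S_t = S_{t-1} - g_t/G, S_0 = 0, |g_t| ≤ G. Then for all T ≥ 1, t-wise, |x_t - x_{t+1}| ≤ (1/2)[V_α(t,S_{t-1}+2) + V_α(t,S_{t-1}-2) - 2V_α(t,S_{t-1})]. -/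
/-!
With `F u = ∫₀^u exp(x²) dx` and `b = √(4αt)`, differences of the potential are window
integrals, `V(t,p) - V(t,q) = C ∫_q^p F(v/b) dv`. Since `F` is increasing, sliding the window
`[S-1, S+1]` by `|δ| ≤ 1` moves it between `[S-2, S]` and `[S, S+2]`, so the only real issue is
the change of scale `b ↦ b' = √(4α(t+1))`. On `v ≤ 0` the integrand `exp(x²)` is decreasing, so
the rescaling loss `F(v/b') - F(v/b)` is at most `(v/b' - v/b) exp((v/b)²)`, while
`F(v/b) - F((v-2)/b) ≥ (2/b) exp((v/b)²)`; as `|S| ≤ t + 1`, the losses at `v` and `v + 1` together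
stay below the latter. Integrating over `v ∈ [S, S+1]`, and using that `F` is odd for the other
sign, bounds the switching by the discrete second difference.
-/

open intervalIntegral MeasureTheory

namespace intervalIntegral

variable {f : ℝ → ℝ}

theorem integral_two_eq_integral_add_shift (hf : Continuous f) (s : ℝ) :
    ∫ v in s..s + 2, f v = ∫ v in s..s + 1, (f v + f (v + 1)) := by
  have hshift : IntervalIntegrable (fun v => f (v + 1)) volume s (s + 1) :=
    (hf.comp (continuous_add_const 1)).intervalIntegrable _ _
  rw [integral_add (hf.intervalIntegrable _ _) hshift, integral_comp_add_right f 1,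
    integral_add_adjacent_intervals (hf.intervalIntegrable _ _) (hf.intervalIntegrable _ _)]
  ring_nf

theorem integral_sub_integral_shift_eq (hf : Continuous f) (s : ℝ) :
    (∫ v in s - 1..s + 1, f v) - ∫ v in s - 2..s, f v = ∫ v in s..s + 1, (f v - f (v - 2)) := by
  have hshift : IntervalIntegrable (fun v => f (v - 2)) volume s (s + 1) :=
    (hf.comp (continuous_sub_right 2)).intervalIntegrable _ _
  rw [integral_interval_sub_interval_comm' (hf.intervalIntegrable _ _) (hf.intervalIntegrable _ _)
      (hf.intervalIntegrable _ _), integral_sub (hf.intervalIntegrable _ _) hshift,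
    integral_comp_sub_right f 2]
  ring_nf

theorem _root_.Monotone.integral_le_integral_shift (hf : Monotone f) {a a' w : ℝ} (hw : 0 ≤ w)
    (ha : a ≤ a') : ∫ x in a..a + w, f x ≤ ∫ x in a'..a' + w, f x := by
  have hshift (c : ℝ) : ∫ x in c..c + w, f x = ∫ x in (0 : ℝ)..w, f (x + c) := by
    rw [integral_comp_add_right]; ring_nf
  rw [hshift, hshift]
  exact integral_mono_on hw (hf.comp (monotone_id.add_const a)).intervalIntegrable
    (hf.comp (monotone_id.add_const a')).intervalIntegrable fun x _ => hf (by linarith)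

theorem integral_neg_neg_of_odd (hf : ∀ x, f (-x) = -f x) (p q : ℝ) :
    ∫ x in -q..-p, f x = -∫ x in p..q, f x := by
  rw [← integral_comp_neg, ← integral_neg]
  simp only [hf]

end intervalIntegral

noncomputable def expSqPrimitive (u : ℝ) : ℝ := ∫ x in (0:ℝ)..u, Real.exp (x ^ 2)

namespace expSqPrimitive

theorem intervalIntegrable_exp_sq (a b : ℝ) :
    IntervalIntegrable (fun x : ℝ => Real.exp (x ^ 2)) volume a b :=
  (by fun_prop : Continuous fun x : ℝ => Real.exp (x ^ 2)).intervalIntegrable a b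

@[fun_prop]
theorem continuous : Continuous expSqPrimitive :=
  continuous_primitive intervalIntegrable_exp_sq 0

theorem sub_eq_integral (p q : ℝ) :
    expSqPrimitive q - expSqPrimitive p = ∫ x in p..q, Real.exp (x ^ 2) :=
  integral_interval_sub_left (intervalIntegrable_exp_sq 0 q) (intervalIntegrable_exp_sq 0 p)

theorem monotone : Monotone expSqPrimitive := fun p q hpq => by
  have : 0 ≤ ∫ x in p..q, Real.exp (x ^ 2) := integral_nonneg hpq fun x _ => (Real.exp_pos _).le
  linarith [sub_eq_integral p q]

theorem neg (u : ℝ) : expSqPrimitive (-u) = -expSqPrimitive u := by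
  have h := integral_comp_neg (a := 0) (b := u) fun x => Real.exp (x ^ 2)
  simp only [neg_sq, neg_zero] at h
  rw [expSqPrimitive, expSqPrimitive, h, integral_symm]

theorem sub_le_mul_exp_sq {p q : ℝ} (hpq : p ≤ q) (hq : q ≤ 0) :
    expSqPrimitive q - expSqPrimitive p ≤ (q - p) * Real.exp (p ^ 2) := by
  rw [sub_eq_integral, ← smul_eq_mul, ← intervalIntegral.integral_const]
  exact integral_mono_on hpq (intervalIntegrable_exp_sq p q) intervalIntegrable_const
    fun x hx => Real.exp_le_exp.mpr (by nlinarith [hx.1, hx.2])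

theorem mul_exp_sq_le_sub {p q : ℝ} (hpq : p ≤ q) (hq : q ≤ 0) :
    (q - p) * Real.exp (q ^ 2) ≤ expSqPrimitive q - expSqPrimitive p := by
  rw [sub_eq_integral, ← smul_eq_mul, ← intervalIntegral.integral_const]
  exact integral_mono_on hpq intervalIntegrable_const (intervalIntegrable_exp_sq p q)
    fun x hx => Real.exp_le_exp.mpr (by nlinarith [hx.1, hx.2])

theorem rescale_add_le_sub {b b' v : ℝ} (hb : 0 < b) (hbb : b ≤ b') (hv : -v * (b' - b) ≤ b') :
    (expSqPrimitive (v / b') - expSqPrimitive (v / b))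
        + (expSqPrimitive ((v + 1) / b') - expSqPrimitive ((v + 1) / b))
      ≤ expSqPrimitive (v / b) - expSqPrimitive ((v - 2) / b) := by
  have hb' : 0 < b' := hb.trans_le hbb
  have hshrink (w : ℝ) (hw : 0 ≤ w) : expSqPrimitive (w / b') ≤ expSqPrimitive (w / b) :=
    monotone (div_le_div_of_nonneg_left hw hb hbb)
  rcases le_or_gt 0 v with hv0 | hv0
  · have hgap : expSqPrimitive ((v - 2) / b) ≤ expSqPrimitive (v / b) :=
      monotone (by gcongr; linarith)
    linarith [hshrink v hv0, hshrink (v + 1) (by linarith)]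
  -- For `v < 0` both rescaling losses are at most `c e` and the gap is at least `(2 / b) e`.
  set e := Real.exp ((v / b) ^ 2)
  set c := -v * (b' - b) / (b * b')
  have hc : c ≤ 1 / b := by
    rw [div_le_div_iff₀ (by positivity) hb]; nlinarith
  have hloss (w : ℝ) (hw : w ≤ 0) :
      expSqPrimitive (w / b') - expSqPrimitive (w / b)
        ≤ -w * (b' - b) / (b * b') * Real.exp ((w / b) ^ 2) := by
    rw [show -w * (b' - b) / (b * b') = w / b' - w / b by field_simp; ring]
    refine sub_le_mul_exp_sq ?_ (div_nonpos_of_nonpos_of_nonneg hw hb'.le)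
    rw [div_le_div_iff₀ hb hb']; nlinarith
  have hc₀ : 0 ≤ c := div_nonneg (mul_nonneg (by linarith) (by linarith)) (by positivity)
  have hloss₀ : expSqPrimitive (v / b') - expSqPrimitive (v / b) ≤ c * e := hloss v hv0.le
  have hloss₁ : expSqPrimitive ((v + 1) / b') - expSqPrimitive ((v + 1) / b) ≤ c * e := by
    rcases le_or_gt (v + 1) 0 with hv1 | hv1
    · refine (hloss (v + 1) hv1).trans (mul_le_mul ?_ ?_ (Real.exp_pos _).le hc₀)
      · exact div_le_div_of_nonneg_right (by nlinarith) (by positivity)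
      · exact Real.exp_le_exp.mpr (by
          rw [div_pow, div_pow]; exact div_le_div_of_nonneg_right (by nlinarith) (by positivity))
    · linarith [hshrink (v + 1) hv1.le, mul_nonneg hc₀ (Real.exp_pos ((v / b) ^ 2)).le]
  have hgap : 2 / b * e ≤ expSqPrimitive (v / b) - expSqPrimitive ((v - 2) / b) := by
    have h := mul_exp_sq_le_sub (p := (v - 2) / b) (q := v / b) (by gcongr; linarith)
      (div_nonpos_of_nonpos_of_nonneg hv0.le hb.le)
    rwa [show v / b - (v - 2) / b = 2 / b by ring] at h
  have hce : c * e ≤ 1 / b * e := mul_le_mul_of_nonneg_right hc (Real.exp_pos _).le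
  linarith [show 2 / b * e = 2 * (1 / b * e) by ring]

end expSqPrimitive

noncomputable def potentialIncrement (b p q : ℝ) : ℝ := ∫ v in p..q, expSqPrimitive (v / b)

namespace potentialIncrement

theorem neg (b p q : ℝ) : potentialIncrement b (-q) (-p) = -potentialIncrement b p q :=
  integral_neg_neg_of_odd (fun x => by rw [neg_div, expSqPrimitive.neg]) p q

theorem shift_two_le {b a a' : ℝ} (hb : 0 ≤ b) (ha : a ≤ a') :
    potentialIncrement b a (a + 2) ≤ potentialIncrement b a' (a' + 2) :=
  (expSqPrimitive.monotone.comp fun _ _ h => div_le_div_of_nonneg_right h hb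
    ).integral_le_integral_shift zero_le_two ha

theorem rescale_le {b b' s : ℝ} (hb : 0 < b) (hbb : b ≤ b') (hs : -s * (b' - b) ≤ b') :
    potentialIncrement b' s (s + 2) ≤ potentialIncrement b s (s + 2)
      + (potentialIncrement b (s - 1) (s + 1) - potentialIncrement b (s - 2) s) := by
  have hcont (c : ℝ) : Continuous fun v => expSqPrimitive (v / c) := by fun_prop
  unfold potentialIncrement
  rw [integral_two_eq_integral_add_shift (hcont b'), integral_two_eq_integral_add_shift (hcont b),
    integral_sub_integral_shift_eq (hcont b), ← intervalIntegral.integral_add]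
  · refine integral_mono_on (by linarith) ?_ ?_ fun v hv => ?_
    · exact Continuous.intervalIntegrable (by fun_prop) _ _
    · exact Continuous.intervalIntegrable (by fun_prop) _ _
    have := expSqPrimitive.rescale_add_le_sub hb hbb (v := v) (by nlinarith [hv.1])
    linarith
  all_goals exact Continuous.intervalIntegrable (by fun_prop) _ _

theorem abs_sub_le {b b' s δ : ℝ} (hb : 0 < b) (hbb : b ≤ b') (hs : |s| * (b' - b) ≤ b')
    (hδ : |δ| ≤ 1) :
    |potentialIncrement b (s - 1) (s + 1) - potentialIncrement b' (s - δ - 1) (s - δ + 1)|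
      ≤ potentialIncrement b s (s + 2) - potentialIncrement b (s - 2) s := by
  have hup := rescale_le hb hbb (s := s) (by nlinarith [neg_le_abs s])
  have hlow := rescale_le hb hbb (s := -s) (by nlinarith [le_abs_self s])
  rw [show -s + 2 = -(s - 2) by ring, show -s - 1 = -(s + 1) by ring,
    show -s + 1 = -(s - 1) by ring, show -s - 2 = -(s + 2) by ring] at hlow
  simp only [neg] at hlow
  obtain ⟨hδ₁, hδ₂⟩ := abs_le.mp hδ
  have hleft : potentialIncrement b' (s - 2) s ≤ potentialIncrement b' (s - δ - 1) (s - δ + 1) := by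
    convert shift_two_le (hb.le.trans hbb) (show s - 2 ≤ s - δ - 1 by linarith) using 2 <;> ring
  have hright : potentialIncrement b' (s - δ - 1) (s - δ + 1) ≤ potentialIncrement b' s (s + 2) := by
    convert shift_two_le (hb.le.trans hbb) (show s - δ - 1 ≤ s by linarith) using 2; ring
  rw [abs_le]
  constructor <;> linarith

end potentialIncrement

theorem Vpot_sub_Vpot (C α t p q : ℝ) :
    Vpot C α t p - Vpot C α t q = C * potentialIncrement (Real.sqrt (4 * α * t)) q p := by
  have hhalf : Real.sqrt (α * t) = Real.sqrt (4 * α * t) / 2 := by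
    rw [show 4 * α * t = 2 ^ 2 * (α * t) by ring, Real.sqrt_mul (show (0:ℝ) ≤ 2 ^ 2 by norm_num),
      Real.sqrt_sq zero_le_two]
    ring
  set b := Real.sqrt (4 * α * t)
  have hV (S : ℝ) : Vpot C α t S =
      C * (b / 2) * (2 * (∫ u in (0:ℝ)..S / b, expSqPrimitive u) - 1) := by
    rw [Vpot, hhalf]; rfl
  rcases eq_or_ne b 0 with h0 | h0
  · simp [hV, potentialIncrement, h0, expSqPrimitive]
  have hsplit := integral_interval_sub_left (μ := volume) (a := 0) (b := p / b) (c := q / b)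
    (expSqPrimitive.continuous.intervalIntegrable _ _)
    (expSqPrimitive.continuous.intervalIntegrable _ _)
  rw [hV, hV, potentialIncrement, integral_comp_div _ h0, smul_eq_mul, ← hsplit]
  ring

theorem abs_mul_sqrt_sub_le {α t s : ℝ} (hα : 0 ≤ α) (ht : 0 ≤ t) (hs : |s| ≤ t + 1) :
    |s| * (Real.sqrt (4 * α * (t + 1)) - Real.sqrt (4 * α * t)) ≤ Real.sqrt (4 * α * (t + 1)) := by
  set r := Real.sqrt (4 * α * (t + 1))
  set q := Real.sqrt (4 * α * t)
  have hr : r ^ 2 = 4 * α * (t + 1) := Real.sq_sqrt (by positivity)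
  have hq : q ^ 2 = 4 * α * t := Real.sq_sqrt (by positivity)
  have hq0 : 0 ≤ q := Real.sqrt_nonneg _
  have hqr : q ≤ r := Real.sqrt_le_sqrt (by nlinarith)
  have hkey : (t + 1) * (r - q) * (r + q) = r ^ 2 := by
    linear_combination (t + 1) * (hr - hq) - hr
  have hmain : (t + 1) * (r - q) ≤ r := by
    rcases (hq0.trans hqr).eq_or_lt with hr0 | hr0
    · rw [← hr0] at hqr ⊢; nlinarith
    · nlinarith
  nlinarith [abs_nonneg s]

theorem abs_Vpot_discreteGrad_sub_le {C α t s δ : ℝ} (hC : 0 ≤ C) (hα : 0 < α) (ht : 0 < t)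
    (hs : |s| ≤ t + 1) (hδ : |δ| ≤ 1) :
    |(Vpot C α t (s + 1) - Vpot C α t (s - 1)) / 2
        - (Vpot C α (t + 1) (s - δ + 1) - Vpot C α (t + 1) (s - δ - 1)) / 2|
      ≤ 1 / 2 * (Vpot C α t (s + 2) + Vpot C α t (s - 2) - 2 * Vpot C α t s) := by
  have hb : 0 < Real.sqrt (4 * α * t) := Real.sqrt_pos.mpr (by positivity)
  have hbb : Real.sqrt (4 * α * t) ≤ Real.sqrt (4 * α * (t + 1)) :=
    Real.sqrt_le_sqrt (by nlinarith)
  rw [Vpot_sub_Vpot, Vpot_sub_Vpot, show ∀ a b : ℝ, C * a / 2 - C * b / 2 = C / 2 * (a - b) from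
    fun a b => by ring, abs_mul, abs_of_nonneg (by positivity)]
  refine (mul_le_mul_of_nonneg_left (potentialIncrement.abs_sub_le hb hbb
    (abs_mul_sqrt_sub_le hα.le ht.le hs) hδ) (by positivity)).trans_eq ?_
  linear_combination (Vpot_sub_Vpot C α t s (s - 2) - Vpot_sub_Vpot C α t (s + 2) s) / 2

/-- With `α = 4λ/G + 2` and predictions `x_t = ∇̄_S V_α(t, S_{t-1})`, `S_t = S_{t-1} - g_t/G`,
`|g_t| ≤ G`, the one-step switching satisfies
`|x_t - x_{t+1}| ≤ (1/2)[V_α(t,S_{t-1}+2) + V_α(t,S_{t-1}-2) - 2 V_α(t,S_{t-1})]`. -/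
theorem switching_le_discrete_second_deriv (lam G C α : ℝ)
    (hlam : 0 ≤ lam) (hG : 0 < G) (hC : 0 < C) (hα : α = 4 * lam / G + 2)
    (g S x : ℕ → ℝ) (hg : ∀ t, |g t| ≤ G) (hS0 : S 0 = 0)
    (hS : ∀ t, 1 ≤ t → S t = S (t - 1) - g t / G)
    (hx : ∀ t, 1 ≤ t →
      x t = (Vpot C α (t : ℝ) (S (t - 1) + 1) - Vpot C α (t : ℝ) (S (t - 1) - 1)) / 2) :
    ∀ t, 1 ≤ t →
      |x t - x (t + 1)| ≤
        (1 / 2) * (Vpot C α (t : ℝ) (S (t - 1) + 2) + Vpot C α (t : ℝ) (S (t - 1) - 2)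
          - 2 * Vpot C α (t : ℝ) (S (t - 1))) := by
  intro t ht
  have hα₀ : 0 < α := by rw [hα]; positivity
  have hstep (n : ℕ) : |g n / G| ≤ 1 := by
    rw [abs_div, abs_of_pos hG]; exact div_le_one_of_le₀ (hg n) hG.le
  have hSt : |S (t - 1)| ≤ ((t - 1 : ℕ) : ℝ) := by
    have := dist_le_range_sum_of_dist_le (f := S) (t - 1) (d := fun _ => 1) fun {k} _ => by
      rw [Real.dist_eq, hS (k + 1) (by omega), Nat.add_sub_cancel, sub_sub_cancel]
      exact hstep _
    simpa [hS0, Real.dist_eq, abs_sub_comm] using this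
  rw [hx t ht, hx (t + 1) (by omega), Nat.add_sub_cancel, hS t ht, Nat.cast_succ]
  refine abs_Vpot_discreteGrad_sub_le hC.le hα₀ (by positivity) ?_ (hstep t)
  exact hSt.trans (by norm_cast; omega)
end

section
/- For every integer d ≥ 3, define p, q ∈ Δ(d) by p₁ = 1/√(log d), q₁ = 1/(d√(log d)), and p_i = (1-p₁)/(d-1), q_i = (1-q₁)/(d-1) for 2 ≤ i ≤ d. Then TV(p,q) = (d-1)/(d√(log d)), KL(p‖q) ≥ √(log d) + log(1 - d/(d√(log d) - 1)), and KL(p‖q) ≤ √d; in particular TV(p,q)·KL(p‖q) ≤ 1. -/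
/-!
With `s = √(log d)`, `a = 1/s` and `b = 1/(d s)`, both distributions are uniform off the first
coordinate, so TV and KL reduce to those of the Bernoulli laws `(a, 1 - a)` and `(b, 1 - b)`:
`TV = a - b = (d - 1)/(d s)` and `KL = a log (a/b) + (1 - a) log r = s + (1 - a) log r` with
`r = (1 - a)/(1 - b) ≤ 1`. Hence `KL ≤ s ≤ √d` and `TV · KL ≤ (d - 1)/d`.
For the lower bound, `(1 - a) log r` dominates both `log r` and, by `log y ≥ 1 - 1/y`, `b - a`.
If `d s - 1 > d` then `0 < 1 - d/(d s - 1) ≤ r`; otherwise the argument is negative, `Real.log`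
reads it as `log |·| ≤ -log (d s - 1)`, and `log (d s - 1) ≥ log (d - 1) ≥ 1 - 1/d ≥ a - b`.
-/

open Real

noncomputable def twoLevel (n : ℕ) (a : ℝ) : Fin n → ℝ :=
  fun i => if (i : ℕ) = 0 then a else (1 - a) / ((n : ℝ) - 1)

noncomputable def binaryKL (a b : ℝ) : ℝ :=
  a * log (a / b) + (1 - a) * log ((1 - a) / (1 - b))

lemma sum_twoLevel {n : ℕ} (hn : 0 < n) (g : ℝ → ℝ → ℝ) (a b : ℝ) :
    ∑ i, g (twoLevel n a i) (twoLevel n b i)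
      = g a b + ((n : ℝ) - 1) * g ((1 - a) / ((n : ℝ) - 1)) ((1 - b) / ((n : ℝ) - 1)) := by
  obtain ⟨m, rfl⟩ : ∃ m, n = m + 1 := ⟨n - 1, by omega⟩
  simp [Fin.sum_univ_succ, twoLevel]

lemma tv_twoLevel {n : ℕ} (hn : 1 < n) (a b : ℝ) :
    (1 / 2) * ∑ i, |twoLevel n a i - twoLevel n b i| = |a - b| := by
  have hn' : (0 : ℝ) < (n : ℝ) - 1 := by
    have : (1 : ℝ) < n := by exact_mod_cast hn
    linarith
  rw [sum_twoLevel (by omega) (fun x y => |x - y|), ← sub_div, abs_div, abs_of_pos hn',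
    mul_div_cancel₀ _ hn'.ne', sub_sub_sub_cancel_left, abs_sub_comm b]
  ring

lemma kl_twoLevel {n : ℕ} (hn : 1 < n) (a b : ℝ) :
    ∑ i, twoLevel n a i * log (twoLevel n a i / twoLevel n b i) = binaryKL a b := by
  have hn' : (n : ℝ) - 1 ≠ 0 := by
    have : (1 : ℝ) < n := by exact_mod_cast hn
    linarith
  rw [sum_twoLevel (by omega) (fun x y => x * log (x / y)), div_div_div_cancel_right₀ hn',
    ← mul_assoc, mul_div_cancel₀ _ hn', binaryKL]

lemma binaryKL_le_mul_log_div {a b : ℝ} (hba : b ≤ a) (ha : a ≤ 1) :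
    binaryKL a b ≤ a * log (a / b) := by
  have hlog : log ((1 - a) / (1 - b)) ≤ 0 :=
    log_nonpos (div_nonneg (by linarith) (by linarith))
      (div_le_one_of_le₀ (by linarith) (by linarith))
  have := mul_nonpos_of_nonneg_of_nonpos (sub_nonneg.2 ha) hlog
  rw [binaryKL]
  linarith

lemma sub_le_mul_log_div {x y : ℝ} (hx : 0 < x) (hy : 0 < y) : x - y ≤ x * log (x / y) := by
  have h := mul_le_mul_of_nonneg_left (one_sub_inv_le_log_of_pos (div_pos hx hy)) hx.le
  rwa [inv_div, mul_sub, mul_one, mul_div_cancel₀ _ hx.ne'] at h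

lemma one_sub_inv_le_log_sub_one {x : ℝ} (hx : 3 ≤ x) : 1 - x⁻¹ ≤ log (x - 1) := by
  have h := one_sub_inv_le_log_of_pos (x := (x - 1) / 2) (by linarith)
  rw [log_div (by linarith) two_ne_zero, inv_div] at h
  have hlog2 := log_two_gt_d9
  have hx' : 2 / (x - 1) - x⁻¹ ≤ 2 / 3 := by
    have hinv : x⁻¹ ≤ 1 / 3 := by rw [inv_le_comm₀ (by linarith) (by norm_num)]; linarith
    have hxinv : x * x⁻¹ = 1 := mul_inv_cancel₀ (by linarith)
    rw [sub_le_iff_le_add, div_le_iff₀ (by linarith)]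
    nlinarith
  linarith

/-- Rules out `d √(log d) - 1 = d`, where the claimed lower bound on KL would be
`s + log 0 = s` and fail. -/
lemma log_natCast_ne_one_add_inv_sq {d : ℕ} (hd : 3 ≤ d) : log d ≠ (1 + 1 / (d : ℝ)) ^ 2 := by
  have hlog2 := log_two_lt_d9
  have hlog4 : log 4 = 2 * log 2 := by
    rw [show (4 : ℝ) = 2 ^ 2 by norm_num, log_pow, Nat.cast_ofNat]
  rcases le_or_gt d 4 with hd4 | hd5
  · have hD : (d : ℝ) ≤ 4 := by exact_mod_cast hd4
    have hlog : log d ≤ log 4 := log_le_log (by positivity) hD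
    have hinv : 1 / 4 ≤ 1 / (d : ℝ) := one_div_le_one_div_of_le (by positivity) hD
    nlinarith
  · have hD : (5 : ℝ) ≤ d := by exact_mod_cast hd5
    have hlog : log 5 ≤ log d := log_le_log (by norm_num) hD
    have hlog5 : log 5 = log 4 + log (5 / 4) := by
      rw [← log_mul (by norm_num) (by norm_num)]; norm_num
    have hlog54 := one_sub_inv_le_log_of_pos (x := 5 / 4) (by norm_num)
    have hinv : 1 / (d : ℝ) ≤ 1 / 5 := one_div_le_one_div_of_le (by norm_num) hD
    have := log_two_gt_d9
    nlinarith [one_div_nonneg.2 (Nat.cast_nonneg (α := ℝ) d)]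

section

variable {D s : ℝ}

lemma abs_inv_sub_inv_mul (hD : 1 ≤ D) (hs : 0 < s) :
    |1 / s - 1 / (D * s)| = (D - 1) / (D * s) := by
  have : 1 / s - 1 / (D * s) = (D - 1) / (D * s) := by field_simp
  rw [this, abs_of_nonneg (div_nonneg (by linarith) (by positivity))]

lemma mul_log_div_inv_inv_mul (hD : 0 < D) (hs : 0 < s) :
    1 / s * log (1 / s / (1 / (D * s))) = log D / s := by
  have : 1 / s / (1 / (D * s)) = D := by field_simp
  rw [this, one_div_mul_eq_div]

lemma binaryKL_inv_inv_mul_le (hD : 1 ≤ D) (hs : 1 ≤ s) :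
    binaryKL (1 / s) (1 / (D * s)) ≤ log D / s := by
  rw [← mul_log_div_inv_inv_mul (by linarith) (by linarith)]
  apply binaryKL_le_mul_log_div
  · exact one_div_le_one_div_of_le (by positivity) (le_mul_of_one_le_left (by linarith) hD)
  · exact div_le_one_of_le₀ hs (by linarith)

lemma log_one_sub_div_le_binaryKL (hD : 3 ≤ D) (hs : 1 < s) (hne : D * s - 1 ≠ D) :
    log D / s + log (1 - D / (D * s - 1)) ≤ binaryKL (1 / s) (1 / (D * s)) := by
  rw [binaryKL, mul_log_div_inv_inv_mul (by linarith) (by linarith), add_le_add_iff_left]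
  have hDs : D < D * s := lt_mul_of_one_lt_right (by linarith) hs
  set r := (1 - 1 / s) / (1 - 1 / (D * s)) with hr_def
  have hr : r = D * (s - 1) / (D * s - 1) := by
    rw [hr_def]; field_simp
  have hr0 : 0 < r := by rw [hr]; exact div_pos (by nlinarith) (by linarith)
  have hr1 : r ≤ 1 := by rw [hr]; exact div_le_one_of_le₀ (by linarith) (by linarith)
  have hu0 : 0 < 1 - 1 / s := by rw [sub_pos, div_lt_one (by linarith)]; exact hs
  have hu1 : 1 - 1 / s ≤ 1 := sub_le_self _ (by positivity)
  have hT : 0 < D * s - 1 := by linarith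
  rcases hne.lt_or_gt with hlt | hgt
  · have hsub_le : 1 - 1 / s - (1 - 1 / (D * s)) ≤ (1 - 1 / s) * log r :=
      sub_le_mul_log_div hu0 (by rw [sub_pos, div_lt_one (by linarith)]; linarith)
    have hlogT : (D - 1) / (D * s) ≤ log (D * s - 1) :=
      calc (D - 1) / (D * s) ≤ (D - 1) / D :=
            div_le_div_of_nonneg_left (by linarith) (by linarith) hDs.le
        _ = 1 - D⁻¹ := by field_simp
        _ ≤ log (D - 1) := one_sub_inv_le_log_sub_one hD
        _ ≤ log (D * s - 1) := log_le_log (by linarith) (by linarith)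
    -- the argument is negative, and `Real.log x = log |x|`
    calc log (1 - D / (D * s - 1)) = log (D / (D * s - 1) - 1) := by
          rw [← log_neg_eq_log]; ring_nf
      _ ≤ log (1 / (D * s - 1)) := by
        apply log_le_log
        · rw [sub_pos, one_lt_div hT]; exact hlt
        · rw [div_sub_one hT.ne']; exact div_le_div_of_nonneg_right (by linarith) hT.le
      _ = - log (D * s - 1) := by rw [one_div, log_inv]
      _ ≤ -((D - 1) / (D * s)) := neg_le_neg hlogT
      _ = 1 - 1 / s - (1 - 1 / (D * s)) := by field_simp; ring
      _ ≤ _ := hsub_le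
  · calc log (1 - D / (D * s - 1)) ≤ log r := by
          apply log_le_log
          · rw [sub_pos, div_lt_one hT]; exact hgt
          · rw [hr, one_sub_div hT.ne']; exact div_le_div_of_nonneg_right (by linarith) hT.le
      _ ≤ (1 - 1 / s) * log r := by nlinarith [log_nonpos hr0.le hr1]

end

/-- For `d ≥ 3`, with `p₁ = 1/√(log d)`, `q₁ = 1/(d√(log d))` and the remaining mass
spread uniformly, `TV(p,q) = (d-1)/(d√(log d))`,
`KL(p‖q) ≥ √(log d) + log(1 - d/(d√(log d) - 1))`, `KL(p‖q) ≤ √d`, and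
`TV(p,q) · KL(p‖q) ≤ 1`. -/
theorem tv_kl_example (d : ℕ) (hd : 3 ≤ d) (p q : Fin d → ℝ)
    (hp : ∀ i : Fin d, p i = if (i : ℕ) = 0 then 1 / Real.sqrt (Real.log d)
      else (1 - 1 / Real.sqrt (Real.log d)) / ((d : ℝ) - 1))
    (hq : ∀ i : Fin d, q i = if (i : ℕ) = 0 then 1 / ((d : ℝ) * Real.sqrt (Real.log d))
      else (1 - 1 / ((d : ℝ) * Real.sqrt (Real.log d))) / ((d : ℝ) - 1)) :
    (1 / 2) * ∑ i, |p i - q i| = ((d : ℝ) - 1) / ((d : ℝ) * Real.sqrt (Real.log d)) ∧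
    Real.sqrt (Real.log d)
        + Real.log (1 - (d : ℝ) / ((d : ℝ) * Real.sqrt (Real.log d) - 1))
      ≤ ∑ i, p i * Real.log (p i / q i) ∧
    ∑ i, p i * Real.log (p i / q i) ≤ Real.sqrt d ∧
    ((1 / 2) * ∑ i, |p i - q i|) * ∑ i, p i * Real.log (p i / q i) ≤ 1 := by
  have hD : (3 : ℝ) ≤ d := by exact_mod_cast hd
  have hlog : 1 < log d := by
    rw [lt_log_iff_exp_lt (by linarith)]; linarith [exp_one_lt_d9]
  set s := √(log d)
  have hs2 : s ^ 2 = log d := sq_sqrt (by linarith)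
  have hs : 1 < s := lt_sqrt_of_sq_lt (by linarith)
  have hlog_div : log d / s = s := by rw [← hs2, sq, mul_div_cancel_right₀ _ (by linarith)]
  have hne : (d : ℝ) * s - 1 ≠ d := fun h ↦ log_natCast_ne_one_add_inv_sq hd <| by
    rw [← hs2, show s = 1 + 1 / (d : ℝ) by field_simp; linarith]
  obtain rfl : p = twoLevel d (1 / s) := funext hp
  obtain rfl : q = twoLevel d (1 / (d * s)) := funext hq
  rw [tv_twoLevel (by omega), kl_twoLevel (by omega),
    abs_inv_sub_inv_mul (by linarith) (by linarith)]
  have hKL_le : binaryKL (1 / s) (1 / (d * s)) ≤ s :=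
    (binaryKL_inv_inv_mul_le (by linarith) hs.le).trans_eq hlog_div
  refine ⟨rfl, by simpa only [hlog_div] using log_one_sub_div_le_binaryKL hD hs hne,
    hKL_le.trans (sqrt_le_sqrt (log_le_self (by linarith))), ?_⟩
  calc (d - 1) / (d * s) * binaryKL (1 / s) (1 / (d * s))
      ≤ (d - 1) / (d * s) * s :=
        mul_le_mul_of_nonneg_left hKL_le (div_nonneg (by linarith) (by positivity))
    _ = (d - 1) / d := by field_simp
    _ ≤ 1 := by rw [div_le_one (by linarith)]; linarith
end

section
/- Let w, w' ∈ ℝ₊^d, and define a = w + (1/d)·max{0, 1 - ‖w‖₁}·𝟙, a' = w' + (1/d)·max{0, 1 - ‖w'‖₁}·𝟙, A = max{‖w‖₁, 1}, A' = max{‖w'‖₁, 1}, and x = a/A, x' = a'/A'. Then ‖x - x'‖₁ ≤ 4‖w - w'‖₁. -/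
/-!
Shifting by the uniform mass deficit moves every coordinate by `1/d` times a 1-Lipschitz function
of `‖w‖₁`, so `‖a - a'‖₁ ≤ 2 ‖w - w'‖₁`. Since `a' ≥ 0` has total mass `A'`, the identity
`a/A - a'/A' = (a - a')/A + a' (A' - A)/(A A')` together with `A ≥ 1` gives
`‖x - x'‖₁ ≤ ‖a - a'‖₁ + |A - A'| ≤ 3 ‖w - w'‖₁`.
-/

open Finset

section

variable {ι : Type*} [Fintype ι]

theorem abs_sum_abs_sub_sum_abs_le (u v : ι → ℝ) :
    |(∑ i, |u i|) - (∑ i, |v i|)| ≤ ∑ i, |u i - v i| := by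
  rw [← sum_sub_distrib]
  exact (abs_sum_le_sum_abs _ _).trans
    (sum_le_sum fun i _ => abs_abs_sub_abs_le_abs_sub _ _)

theorem sum_abs_div_sub_div_le {a a' : ι → ℝ} {A A' : ℝ} (hA : 1 ≤ A) (hA' : 0 < A')
    (ha' : ∀ i, 0 ≤ a' i) (hmass : ∑ i, a' i = A') :
    ∑ i, |a i / A - a' i / A'| ≤ ∑ i, |a i - a' i| + |A - A'| := by
  have hA0 : 0 < A := one_pos.trans_le hA
  have hpoint : ∀ i, |a i / A - a' i / A'| ≤ |a i - a' i| + a' i * (|A - A'| / (A * A')) := by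
    intro i
    have hsplit : a i / A - a' i / A' = (a i - a' i) / A + a' i * ((A' - A) / (A * A')) := by
      field_simp; ring
    rw [hsplit]
    refine (abs_add_le _ _).trans (add_le_add ?_ ?_)
    · rw [abs_div, abs_of_pos hA0]
      exact div_le_self (abs_nonneg _) hA
    · rw [abs_mul, abs_of_nonneg (ha' i), abs_div, abs_of_pos (mul_pos hA0 hA'), abs_sub_comm]
  calc ∑ i, |a i / A - a' i / A'|
      ≤ ∑ i, (|a i - a' i| + a' i * (|A - A'| / (A * A'))) := sum_le_sum fun i _ => hpoint i
    _ = ∑ i, |a i - a' i| + |A - A'| / A := by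
      rw [sum_add_distrib, ← sum_mul, hmass]
      field_simp
    _ ≤ ∑ i, |a i - a' i| + |A - A'| := by
      gcongr
      exact div_le_self (abs_nonneg _) hA

noncomputable def massDeficit (w : ι → ℝ) : ℝ := max 0 (1 - ∑ j, |w j|)

theorem massDeficit_nonneg (w : ι → ℝ) : 0 ≤ massDeficit w := le_max_left _ _

theorem abs_massDeficit_sub_le (u v : ι → ℝ) :
    |massDeficit u - massDeficit v| ≤ ∑ i, |u i - v i| := by
  rw [massDeficit, massDeficit, max_comm 0, max_comm 0]
  refine (abs_max_sub_max_le_abs _ _ _).trans ?_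
  rw [sub_sub_sub_cancel_left, abs_sub_comm]
  exact abs_sum_abs_sub_sum_abs_le u v

noncomputable def simplexShift (w : ι → ℝ) : ι → ℝ :=
  fun i => w i + (Fintype.card ι : ℝ)⁻¹ * massDeficit w

theorem simplexShift_nonneg {w : ι → ℝ} (hw : ∀ i, 0 ≤ w i) (i : ι) : 0 ≤ simplexShift w i :=
  add_nonneg (hw i) (mul_nonneg (by positivity) (massDeficit_nonneg w))

theorem sum_simplexShift [Nonempty ι] {w : ι → ℝ} (hw : ∀ i, 0 ≤ w i) :
    ∑ i, simplexShift w i = max (∑ j, |w j|) 1 := by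
  have hcard : (Fintype.card ι : ℝ) ≠ 0 := Nat.cast_ne_zero.mpr Fintype.card_ne_zero
  have hsum : ∑ i, w i = ∑ j, |w j| := sum_congr rfl fun i _ => (abs_of_nonneg (hw i)).symm
  simp only [simplexShift, massDeficit, sum_add_distrib, sum_const, card_univ, nsmul_eq_mul, hsum]
  rw [← mul_assoc, mul_inv_cancel₀ hcard, one_mul]
  rcases le_total (∑ j, |w j|) 1 with h | h
  · rw [max_eq_right (by linarith), max_eq_right h]; ring
  · rw [max_eq_left (by linarith), max_eq_left h]; ring

theorem sum_abs_simplexShift_sub_le (u v : ι → ℝ) :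
    ∑ i, |simplexShift u i - simplexShift v i| ≤ 2 * ∑ i, |u i - v i| := by
  set c := (Fintype.card ι : ℝ)⁻¹
  have hpoint : ∀ i, |simplexShift u i - simplexShift v i|
      ≤ |u i - v i| + c * |massDeficit u - massDeficit v| := by
    intro i
    have hsplit : simplexShift u i - simplexShift v i
        = (u i - v i) + c * (massDeficit u - massDeficit v) := by
      simp only [simplexShift, c]; ring
    rw [hsplit]
    refine (abs_add_le _ _).trans_eq ?_
    rw [abs_mul, abs_of_nonneg (by positivity : 0 ≤ c)]
  calc ∑ i, |simplexShift u i - simplexShift v i|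
      ≤ ∑ i, (|u i - v i| + c * |massDeficit u - massDeficit v|) :=
        sum_le_sum fun i _ => hpoint i
    _ = ∑ i, |u i - v i| + Fintype.card ι * c * |massDeficit u - massDeficit v| := by
      rw [sum_add_distrib, sum_const, card_univ, nsmul_eq_mul, mul_assoc]
    _ ≤ ∑ i, |u i - v i| + |massDeficit u - massDeficit v| := by
      gcongr
      exact mul_le_of_le_one_left (abs_nonneg _) mul_inv_le_one
    _ ≤ 2 * ∑ i, |u i - v i| := by linarith [abs_massDeficit_sub_le u v]

end

theorem simplex_projection_lipschitz_general (d : ℕ) (hd : 0 < d)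
    (w w' a a' x x' : Fin d → ℝ)
    (hw' : ∀ i, 0 ≤ w' i)
    (ha : ∀ i, a i = w i + (1 / (d : ℝ)) * max 0 (1 - ∑ j, |w j|))
    (ha' : ∀ i, a' i = w' i + (1 / (d : ℝ)) * max 0 (1 - ∑ j, |w' j|))
    (hx : ∀ i, x i = a i / max (∑ j, |w j|) 1)
    (hx' : ∀ i, x' i = a' i / max (∑ j, |w' j|) 1) :
    ∑ i, |x i - x' i| ≤ 4 * ∑ i, |w i - w' i| := by
  have : Nonempty (Fin d) := ⟨⟨0, hd⟩⟩
  obtain rfl : a = simplexShift w := funext fun i => by simp [ha i, simplexShift, massDeficit]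
  obtain rfl : a' = simplexShift w' := funext fun i => by simp [ha' i, simplexShift, massDeficit]
  have hmass : |max (∑ j, |w j|) 1 - max (∑ j, |w' j|) 1| ≤ ∑ i, |w i - w' i| :=
    (abs_max_sub_max_le_abs _ _ _).trans (abs_sum_abs_sub_sum_abs_le w w')
  simp only [hx, hx']
  calc _ ≤ ∑ i, |simplexShift w i - simplexShift w' i|
        + |max (∑ j, |w j|) 1 - max (∑ j, |w' j|) 1| :=
        sum_abs_div_sub_div_le (le_max_right _ _) (one_pos.trans_le (le_max_right _ _))
          (simplexShift_nonneg hw') (sum_simplexShift hw')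
    _ ≤ 2 * ∑ i, |w i - w' i| + ∑ i, |w i - w' i| :=
        add_le_add (sum_abs_simplexShift_sub_le w w') hmass
    _ ≤ 4 * ∑ i, |w i - w' i| := by
        linarith [sum_nonneg fun i (_ : i ∈ univ) => abs_nonneg (w i - w' i)]

/-- Lipschitz property of the modified projection onto the simplex:
with `a = w + (1/d) max{0, 1 - ‖w‖₁} 𝟙`, `A = max{‖w‖₁, 1}`, `x = a/A` (and likewise
for `w'`), we have `‖x - x'‖₁ ≤ 4 ‖w - w'‖₁` for nonnegative `w, w'`. -/
theorem simplex_projection_lipschitz (d : ℕ) (hd : 0 < d)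
    (w w' a a' x x' : Fin d → ℝ)
    (hw : ∀ i, 0 ≤ w i) (hw' : ∀ i, 0 ≤ w' i)
    (ha : ∀ i, a i = w i + (1 / (d : ℝ)) * max 0 (1 - ∑ j, |w j|))
    (ha' : ∀ i, a' i = w' i + (1 / (d : ℝ)) * max 0 (1 - ∑ j, |w' j|))
    (hx : ∀ i, x i = a i / max (∑ j, |w j|) 1)
    (hx' : ∀ i, x' i = a' i / max (∑ j, |w' j|) 1) :
    ∑ i, |x i - x' i| ≤ 4 * ∑ i, |w i - w' i| :=
  simplex_projection_lipschitz_general d hd w w' a a' x x' hw' ha ha' hx hx'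
end

section
/- Let g ∈ [-G,G]^d, w ∈ ℝ₊^d, u ∈ Δ(d), and define x ∈ Δ(d) by x = w + (1/d)(1-‖w‖₁)𝟙 if ‖w‖₁ ≤ 1 and x = w/‖w‖₁ if ‖w‖₁ > 1. Define z ∈ ℝ^d by z = g - ‖g‖_∞·𝟙 if ‖w‖₁ < 1, z = g if ‖w‖₁ = 1, and z = g + ‖g‖_∞·𝟙 if ‖w‖₁ > 1. Then ⟨g, x - u⟩ ≤ ⟨z, w - u⟩. -/
/-!
Write `S = ∑ wᵢ` and `M = ‖g‖_∞`. The correction `x - w` has all entries of the sign of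
`1 - S` and sums to `1 - S`, so its ℓ¹-norm is `|S - 1|`, and Hölder bounds
`⟨g, x - w⟩ ≤ M |S - 1|`. On the other side `z - g` is the constant `±M` chosen with the
sign of `S - 1`, and `∑ (wᵢ - uᵢ) = S - 1`, so `⟨z - g, w - u⟩ = M |S - 1|` exactly.
-/

open Finset

namespace SurrogateLoss

variable {ι : Type*} [Fintype ι]

theorem sum_mul_le_mul_sum_abs {g v : ι → ℝ} {M : ℝ} (hg : ∀ i, |g i| ≤ M) :
    ∑ i, g i * v i ≤ M * ∑ i, |v i| := by
  rw [mul_sum]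
  refine sum_le_sum fun i _ => ?_
  calc g i * v i ≤ |g i| * |v i| := abs_mul (g i) (v i) ▸ le_abs_self _
    _ ≤ M * |v i| := mul_le_mul_of_nonneg_right (hg i) (abs_nonneg _)

noncomputable def simplexProj (w : ι → ℝ) (i : ι) : ℝ :=
  if ∑ j, w j ≤ 1 then w i + (1 / (Fintype.card ι : ℝ)) * (1 - ∑ j, w j)
  else w i / ∑ j, w j

noncomputable def surrogate (g w : ι → ℝ) (M : ℝ) (i : ι) : ℝ :=
  if ∑ j, w j < 1 then g i - M
  else if ∑ j, w j = 1 then g i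
  else g i + M

theorem sum_abs_simplexProj_sub [Nonempty ι] {w : ι → ℝ} (hw : ∀ i, 0 ≤ w i) :
    ∑ i, |simplexProj w i - w i| = |∑ i, w i - 1| := by
  by_cases h : ∑ i, w i ≤ 1
  · have hcard : (0 : ℝ) < Fintype.card ι := by exact_mod_cast Fintype.card_pos
    simp only [simplexProj, if_pos h, add_sub_cancel_left, sum_const, card_univ, nsmul_eq_mul]
    rw [abs_of_nonneg (by have := sub_nonneg.mpr h; positivity), abs_of_nonpos (by linarith)]
    field_simp
    ring
  · have hS : 0 < ∑ i, w i := by linarith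
    calc ∑ i, |simplexProj w i - w i| = ∑ i, w i * (1 - 1 / ∑ j, w j) := by
          refine sum_congr rfl fun i _ => ?_
          have hle : w i / ∑ j, w j ≤ w i := div_le_self (hw i) (by linarith)
          rw [simplexProj, if_neg h, abs_of_nonpos (sub_nonpos.mpr hle)]
          ring
      _ = |∑ i, w i - 1| := by
          rw [← sum_mul, abs_of_pos (by linarith)]
          field_simp

theorem sum_surrogate_mul_sub (g : ι → ℝ) {w u : ι → ℝ} (M : ℝ) (hu : ∑ i, u i = 1) :
    ∑ i, surrogate g w M i * (w i - u i) = ∑ i, g i * (w i - u i) + M * |∑ i, w i - 1| := by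
  obtain ⟨c, hc, hcS⟩ : ∃ c, (∀ i, surrogate g w M i = g i + c) ∧
      c * (∑ i, w i - 1) = M * |∑ i, w i - 1| := by
    rcases lt_trichotomy (∑ i, w i) 1 with h | h | h
    · refine ⟨-M, fun i => ?_, ?_⟩
      · simp only [surrogate, if_pos h]
        ring
      · rw [abs_of_neg (by linarith)]
        ring
    · exact ⟨0, fun i => by simp [surrogate, h], by simp [h]⟩
    · refine ⟨M, fun i => ?_, by rw [abs_of_pos (by linarith)]⟩
      simp only [surrogate, if_neg (not_lt.mpr h.le), if_neg h.ne']
  simp only [hc, add_mul, sum_add_distrib, ← mul_sum, sum_sub_distrib, hu]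
  rw [hcS]

theorem sum_mul_simplexProj_sub_le [Nonempty ι] {g w u : ι → ℝ} {M : ℝ}
    (hg : ∀ i, |g i| ≤ M) (hw : ∀ i, 0 ≤ w i) (hu : ∑ i, u i = 1) :
    ∑ i, g i * (simplexProj w i - u i) ≤ ∑ i, surrogate g w M i * (w i - u i) := by
  rw [sum_surrogate_mul_sub g M hu, ← sum_abs_simplexProj_sub hw]
  calc ∑ i, g i * (simplexProj w i - u i)
      = ∑ i, g i * (w i - u i) + ∑ i, g i * (simplexProj w i - w i) := by
        rw [← sum_add_distrib]
        exact sum_congr rfl fun i _ => by ring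
    _ ≤ _ := by gcongr; exact sum_mul_le_mul_sum_abs hg

end SurrogateLoss

open SurrogateLoss in
theorem surrogate_loss_ineq_general (d : ℕ) (hne : (Finset.univ : Finset (Fin d)).Nonempty)
    (g w u x z : Fin d → ℝ)
    (hw : ∀ i, 0 ≤ w i)
    (hu : (∀ i, 0 ≤ u i) ∧ ∑ i, u i = 1)
    (hx : ∀ i, x i = if ∑ j, w j ≤ 1 then w i + (1 / (d : ℝ)) * (1 - ∑ j, w j)
      else w i / ∑ j, w j)
    (hz : ∀ i, z i =
      if ∑ j, w j < 1 then g i - Finset.univ.sup' hne (fun k => |g k|)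
      else if ∑ j, w j = 1 then g i
      else g i + Finset.univ.sup' hne (fun k => |g k|)) :
    ∑ i, g i * (x i - u i) ≤ ∑ i, z i * (w i - u i) := by
  have : Nonempty (Fin d) := Finset.univ_nonempty_iff.mp hne
  have hx' : x = simplexProj w := funext fun i => by rw [hx, simplexProj, Fintype.card_fin]
  have hz' : z = surrogate g w (Finset.univ.sup' hne fun k => |g k|) := funext hz
  rw [hx', hz']
  exact sum_mul_simplexProj_sub_le (fun i => le_sup' (fun k => |g k|) (mem_univ i)) hw hu.2

/-- Surrogate-loss inequality for the OLO-to-LEA reduction: with `x` the modified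
projection of the nonnegative weight vector `w` onto the simplex and `z` the surrogate
loss built from `g` and `‖g‖_∞`, `⟨g, x - u⟩ ≤ ⟨z, w - u⟩` for any `u` in the simplex. -/
theorem surrogate_loss_ineq (d : ℕ) (hne : (Finset.univ : Finset (Fin d)).Nonempty)
    (G : ℝ) (g w u x z : Fin d → ℝ)
    (hg : ∀ i, |g i| ≤ G) (hw : ∀ i, 0 ≤ w i)
    (hu : (∀ i, 0 ≤ u i) ∧ ∑ i, u i = 1)
    (hx : ∀ i, x i = if ∑ j, w j ≤ 1 then w i + (1 / (d : ℝ)) * (1 - ∑ j, w j)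
      else w i / ∑ j, w j)
    (hz : ∀ i, z i =
      if ∑ j, w j < 1 then g i - Finset.univ.sup' hne (fun k => |g k|)
      else if ∑ j, w j = 1 then g i
      else g i + Finset.univ.sup' hne (fun k => |g k|)) :
    ∑ i, g i * (x i - u i) ≤ ∑ i, z i * (w i - u i) :=
  surrogate_loss_ineq_general d hne g w u x z hw hu hx hz
end
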